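/- arXiv:1708.05486 — 4 statements merged into one kernel-verified Lean document; each statement's English description precedes it below -/
import Mathlib

section
/- If two disjoint tubes T_i and T_j share an x-coordinate a at which T_j lies above T_i (every point of T_j with x-coordinate a has y-coordinate greater than every point of T_i with x-coordinate a), then for any two disjoint x-monotone connected paths p_i ⊆ T_i and p_j ⊆ T_j that each span their tube horizontally, the path p_j lies above p_i at every common x-coordinate of the two paths. -/
open Set

/-- A vertical segment in the plane: {x} × [a,b]. -/
def VSeg (x a b : ℝ) : Set (ℝ × ℝ) := {x} ×ˢ Set.Icc a b

/-- A set of points in the plane is x-monotone if every vertical line meets it in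
at most one point. -/
def XMonotone (P : Set (ℝ × ℝ)) : Prop := ∀ x : ℝ, {p ∈ P | p.1 = x}.Subsingleton

/-!
Disjoint tubes are compact convex sets, so a continuous linear functional `f` strictly separates
them. Along a vertical line `f` is affine in the height, with slope `f (0, 1)`; comparing the two
points above `a` shows this slope is positive. Hence at every common x-coordinate, every point of
`Tⱼ` lies above every point of `Tᵢ`, in particular the points of the two paths.
-/

theorem vSeg_eq_segment {x a b : ℝ} (h : a ≤ b) : VSeg x a b = segment ℝ (x, a) (x, b) := by
  rw [VSeg, singleton_prod, ← segment_eq_Icc h, Prod.image_mk_segment_right]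

theorem isCompact_convexHull_vSeg_union {x a b x' a' b' : ℝ} (h : a ≤ b) (h' : a' ≤ b') :
    IsCompact (convexHull ℝ (VSeg x a b ∪ VSeg x' a' b')) := by
  rw [vSeg_eq_segment h, vSeg_eq_segment h', ← convexHull_pair, ← convexHull_pair,
    convexHull_convexHull_union_left, convexHull_convexHull_union_right]
  exact ((toFinite _).union (toFinite _)).isCompact_convexHull ℝ

section

variable {E : Type*} [TopologicalSpace E] [AddCommGroup E] [Module ℝ E]

theorem ContinuousLinearMap.sub_eq_of_fst_eq (f : E × ℝ →L[ℝ] ℝ) {p q : E × ℝ}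
    (h : p.1 = q.1) : f q - f p = (q.2 - p.2) * f (0, 1) := by
  have hqp : q - p = (q.2 - p.2) • ((0, 1) : E × ℝ) := by
    ext
    · simp [h]
    · simp
  rw [← map_sub, hqp, map_smul, smul_eq_mul]

variable [IsTopologicalAddGroup E] [ContinuousSMul ℝ E] [LocallyConvexSpace ℝ E]

theorem snd_lt_snd_of_disjoint_of_convex {s t : Set (E × ℝ)} (hs : Convex ℝ s)
    (hsc : IsCompact s) (ht : Convex ℝ t) (htc : IsClosed t) (hst : Disjoint s t)
    {p q : E × ℝ} (hp : p ∈ s) (hq : q ∈ t) (hpq₁ : p.1 = q.1) (hpq₂ : p.2 < q.2)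
    {p' q' : E × ℝ} (hp' : p' ∈ s) (hq' : q' ∈ t) (hpq₁' : p'.1 = q'.1) : p'.2 < q'.2 := by
  obtain ⟨f, u, v, hfs, huv, hft⟩ := geometric_hahn_banach_compact_closed hs hsc ht htc hst
  have separates : ∀ {x y}, x ∈ s → y ∈ t → f x < f y := fun hx hy =>
    (hfs _ hx).trans (huv.trans (hft _ hy))
  have slope_pos : 0 < f (0, 1) := by
    have := f.sub_eq_of_fst_eq hpq₁
    nlinarith [separates hp hq]
  have := f.sub_eq_of_fst_eq hpq₁'
  nlinarith [separates hp' hq']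

end

theorem disjoint_tubes_order_propagates_general
    (x₁ a₁ b₁ x₂ a₂ b₂ x₃ a₃ b₃ x₄ a₄ b₄ : ℝ)
    (h₁ : a₁ ≤ b₁) (h₂ : a₂ ≤ b₂) (h₃ : a₃ ≤ b₃) (h₄ : a₄ ≤ b₄)
    (Ti Tj : Set (ℝ × ℝ))
    (hTi : Ti = convexHull ℝ (VSeg x₁ a₁ b₁ ∪ VSeg x₂ a₂ b₂))
    (hTj : Tj = convexHull ℝ (VSeg x₃ a₃ b₃ ∪ VSeg x₄ a₄ b₄))
    (hdisj : Disjoint Ti Tj)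
    -- the tubes share the x-coordinate a, at which Tj lies above Ti:
    (a : ℝ)
    (hai : ∃ p ∈ Ti, p.1 = a) (haj : ∃ q ∈ Tj, q.1 = a)
    (habove : ∀ p ∈ Ti, ∀ q ∈ Tj, p.1 = a → q.1 = a → p.2 < q.2)
    -- the two disjoint x-monotone connected paths spanning their tubes:
    (pi pj : Set (ℝ × ℝ))
    (hpiT : pi ⊆ Ti) (hpjT : pj ⊆ Tj) :
    ∀ b yi yj : ℝ, (b, yi) ∈ pi → (b, yj) ∈ pj → yi < yj := by
  intro b yi yj hbi hbj
  obtain ⟨p, hp, rfl⟩ := hai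
  obtain ⟨q, hq, hqa⟩ := haj
  subst hTi hTj
  exact snd_lt_snd_of_disjoint_of_convex (convex_convexHull ℝ _)
    (isCompact_convexHull_vSeg_union h₁ h₂) (convex_convexHull ℝ _)
    (isCompact_convexHull_vSeg_union h₃ h₄).isClosed hdisj hp hq hqa.symm
    (habove p hp q hq rfl hqa) (hpiT hbi) (hpjT hbj) rfl

/-- If two disjoint tubes share an x-coordinate `a` at which `Tⱼ` lies entirely above
`Tᵢ`, then for any two disjoint x-monotone connected paths, each spanning its own tube,
the path of `Tⱼ` lies above the path of `Tᵢ` at every common x-coordinate. -/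
theorem disjoint_tubes_order_propagates
    (x₁ a₁ b₁ x₂ a₂ b₂ x₃ a₃ b₃ x₄ a₄ b₄ : ℝ)
    (hx₁₂ : x₁ ≠ x₂) (hx₃₄ : x₃ ≠ x₄)
    (h₁ : a₁ ≤ b₁) (h₂ : a₂ ≤ b₂) (h₃ : a₃ ≤ b₃) (h₄ : a₄ ≤ b₄)
    (Ti Tj : Set (ℝ × ℝ))
    (hTi : Ti = convexHull ℝ (VSeg x₁ a₁ b₁ ∪ VSeg x₂ a₂ b₂))
    (hTj : Tj = convexHull ℝ (VSeg x₃ a₃ b₃ ∪ VSeg x₄ a₄ b₄))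
    (hdisj : Disjoint Ti Tj)
    -- the tubes share the x-coordinate a, at which Tj lies above Ti:
    (a : ℝ)
    (hai : ∃ p ∈ Ti, p.1 = a) (haj : ∃ q ∈ Tj, q.1 = a)
    (habove : ∀ p ∈ Ti, ∀ q ∈ Tj, p.1 = a → q.1 = a → p.2 < q.2)
    -- the two disjoint x-monotone connected paths spanning their tubes:
    (pi pj : Set (ℝ × ℝ))
    (hpiT : pi ⊆ Ti) (hpic : IsConnected pi) (hpim : XMonotone pi)
    (hpi1 : (pi ∩ VSeg x₁ a₁ b₁).Nonempty) (hpi2 : (pi ∩ VSeg x₂ a₂ b₂).Nonempty)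
    (hpjT : pj ⊆ Tj) (hpjc : IsConnected pj) (hpjm : XMonotone pj)
    (hpj1 : (pj ∩ VSeg x₃ a₃ b₃).Nonempty) (hpj2 : (pj ∩ VSeg x₄ a₄ b₄).Nonempty)
    (hpdisj : Disjoint pi pj) :
    ∀ b yi yj : ℝ, (b, yi) ∈ pi → (b, yj) ∈ pj → yi < yj :=
  disjoint_tubes_order_propagates_general x₁ a₁ b₁ x₂ a₂ b₂ x₃ a₃ b₃ x₄ a₄ b₄ h₁ h₂ h₃ h₄ Ti Tj hTi
    hTj hdisj a hai haj habove pi pj hpiT hpjT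
end

section
/- A disjoint family of x-monotone paths can be extended to unbounded curves: given pairwise disjoint graphs of continuous functions f_i : [a_i, b_i] → ℝ (i = 1, …, n), there exist continuous functions F_i : ℝ → ℝ with F_i restricted to [a_i, b_i] agreeing with f_i in order type, such that the relative vertical order of F_i and F_j agrees with the vertical order of f_i and f_j wherever their original domains overlap, and the graphs of the F_i are weakly ordered (for i ≠ j, either F_i ≤ F_j everywhere or F_j ≤ F_i everywhere). -/
open Set

/-- The "somewhere below on the overlap" relation between paths. -/
def pathBelowRel {n : ℕ} (a b : Fin n → ℝ) (f : Fin n → ℝ → ℝ) (i j : Fin n) : Prop :=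
  i ≠ j ∧ ∃ x ∈ Icc (a i) (b i) ∩ Icc (a j) (b j), f i x < f j x

/-- Sign constancy on overlaps: if `f i < f j` somewhere on the overlap, it holds everywhere
on the overlap. -/
lemma pathBelowRel.pointwise {n : ℕ} {a b : Fin n → ℝ} {f : Fin n → ℝ → ℝ}
    (hcont : ∀ i, ContinuousOn (f i) (Icc (a i) (b i)))
    (hdisj : ∀ i j : Fin n, i ≠ j →
      ∀ x ∈ Icc (a i) (b i) ∩ Icc (a j) (b j), f i x ≠ f j x)
    {i j : Fin n} (h : pathBelowRel a b f i j) :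
    ∀ y ∈ Icc (a i) (b i) ∩ Icc (a j) (b j), f i y < f j y := by
  obtain ⟨hne, x, hx, hlt⟩ := h
  intro y hy
  by_contra hcon
  push_neg at hcon
  have hcon' : f j y < f i y := lt_of_le_of_ne hcon (fun he => hdisj i j hne y hy he.symm)
  -- intermediate value on the overlap
  have hOC : OrdConnected (Icc (a i) (b i) ∩ Icc (a j) (b j)) :=
    (ordConnected_Icc).inter (ordConnected_Icc)
  have hsub : uIcc x y ⊆ Icc (a i) (b i) ∩ Icc (a j) (b j) := hOC.uIcc_subset hx hy
  set g : ℝ → ℝ := fun z => f i z - f j z with hg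
  have hgc : ContinuousOn g (uIcc x y) :=
    (((hcont i).mono (fun z hz => (hsub hz).1)).sub ((hcont j).mono (fun z hz => (hsub hz).2)))
  have h0 : (0 : ℝ) ∈ uIcc (g x) (g y) := by
    rw [Set.mem_uIcc]
    left
    constructor
    · simp only [hg]; linarith
    · simp only [hg]; linarith
  obtain ⟨z, hz, hz0⟩ := intermediate_value_uIcc hgc h0
  exact hdisj i j hne z (hsub hz) (by simpa [hg, sub_eq_zero] using hz0)

/-- No directed cycles for the relation `pathBelowRel`. -/
lemma pathBelowRel.noCycle {n : ℕ} {a b : Fin n → ℝ} {f : Fin n → ℝ → ℝ}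
    (hcont : ∀ i, ContinuousOn (f i) (Icc (a i) (b i)))
    (hdisj : ∀ i j : Fin n, i ≠ j →
      ∀ x ∈ Icc (a i) (b i) ∩ Icc (a j) (b j), f i x ≠ f j x) :
    ∀ k, 0 < k → ∀ c : ℕ → Fin n,
      (∀ s < k, pathBelowRel a b f (c s) (c (s+1))) → c k = c 0 → False := by
  intro k
  induction k using Nat.strong_induction_on with
  | _ k IH =>
  intro hk c hc hck
  rcases eq_or_lt_of_le (Nat.one_le_iff_ne_zero.mpr (Nat.pos_iff_ne_zero.mp hk)) with h1 | h2
  · -- k = 1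
    have := (hc 0 (by omega)).1
    rw [show (0:ℕ)+1 = k by omega, hck] at this
    exact this rfl
  · -- k ≥ 2
    obtain ⟨t, htmem, hmin⟩ :=
      Finset.exists_min_image (Finset.range k) (fun s => b (c s)) ⟨0, Finset.mem_range.mpr hk⟩
    have ht : t < k := Finset.mem_range.mp htmem
    set r : ℕ := (t + (k-1)) % k with hr
    set d : ℕ → Fin n := fun s => c ((s + r) % k) with hd
    have hdc : ∀ s, pathBelowRel a b f (d s) (d (s+1)) := by
      intro s
      have hu : (s + r) % k < k := Nat.mod_lt _ hk
      have h1 : (s + 1 + r) % k = ((s + r) % k + 1) % k := by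
        conv_lhs => rw [show s + 1 + r = (s + r) + 1 by ring]
        rw [Nat.add_mod (s+r) 1 k, Nat.mod_eq_of_lt h2]
      have hedge := hc ((s + r) % k) hu
      show pathBelowRel a b f (c ((s + r) % k)) (c ((s + 1 + r) % k))
      rw [h1]
      rcases eq_or_lt_of_le (Nat.succ_le_of_lt hu) with he | hlt
      · have he' : (s + r) % k + 1 = k := by omega
        rw [he'] at hedge
        rwa [he', Nat.mod_self, ← hck]
      · rwa [Nat.mod_eq_of_lt hlt]
    have hd1 : d 1 = c t := by
      show c ((1 + r) % k) = c t
      congr 1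
      rw [hr, Nat.add_comm 1, Nat.mod_add_mod, show t + (k-1) + 1 = t + k by omega,
        Nat.add_mod_right, Nat.mod_eq_of_lt ht]
    have hmind : ∀ s, b (d 1) ≤ b (d s) := by
      intro s
      rw [hd1]
      exact hmin _ (Finset.mem_range.mpr (Nat.mod_lt _ hk))
    -- p is the right endpoint of the minimal interval
    set p : ℝ := b (d 1) with hp
    obtain ⟨hne01, x, hx, _⟩ := hdc 0
    obtain ⟨hne12, x', hx', _⟩ := hdc 1
    have hp0 : p ∈ Icc (a (d 0)) (b (d 0)) := ⟨le_trans hx.1.1 (le_trans hx.2.2 le_rfl), hmind 0⟩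
    have hp1 : p ∈ Icc (a (d 1)) (b (d 1)) := ⟨le_trans hx.2.1 hx.2.2, le_rfl⟩
    have hp2 : p ∈ Icc (a (d 2)) (b (d 2)) := ⟨le_trans hx'.2.1 hx'.1.2, hmind 2⟩
    have hp1' : p ∈ Icc (a (d 1)) (b (d 1)) := hp1
    have hf01 : f (d 0) p < f (d 1) p :=
      (pathBelowRel.pointwise hcont hdisj (hdc 0)) p ⟨hp0, hp1⟩
    have hf12 : f (d 1) p < f (d 2) p :=
      (pathBelowRel.pointwise hcont hdisj (hdc 1)) p ⟨hp1, hp2⟩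
    by_cases h02 : d 0 = d 2
    · rw [h02] at hf01
      exact absurd (lt_trans hf01 hf12) (lt_irrefl _)
    · -- shorter cycle
      have hnew : pathBelowRel a b f (d 0) (d 2) :=
        ⟨h02, p, ⟨hp0, hp2⟩, lt_trans hf01 hf12⟩
      set e : ℕ → Fin n := fun s => if s = 0 then d 0 else d (s+1) with he
      have hd0 : d k = d 0 := by
        show c ((k + r) % k) = c ((0 + r) % k)
        rw [Nat.add_mod_left, Nat.zero_add]
      refine IH (k-1) (by omega) (by omega) e ?_ ?_
      · intro s hs
        rcases Nat.eq_zero_or_pos s with h0 | h0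
        · subst h0
          simpa [he] using hnew
        · have : e s = d (s+1) := by simp [he, Nat.pos_iff_ne_zero.mp h0]
          have h2' : e (s+1) = d (s+2) := by simp [he]
          rw [this, h2']
          exact hdc (s+1)
      · have h1 : e (k-1) = d k := by
          simp only [he, if_neg (show k - 1 ≠ 0 by omega)]
          congr 1
          omega
        rw [h1, hd0]
        simp [he]

/-- Extract a finite chain from a reflexive-transitive closure. -/
lemma chain_of_rtg {α : Type*} {R : α → α → Prop} {x y : α}
    (h : Relation.ReflTransGen R x y) :
    ∃ k, ∃ c : ℕ → α, c 0 = x ∧ c k = y ∧ ∀ s < k, R (c s) (c (s+1)) := by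
  induction h with
  | refl => exact ⟨0, fun _ => x, rfl, rfl, by omega⟩
  | @tail w z hxy hR ih =>
    obtain ⟨k, c, h0, hk, hch⟩ := ih
    refine ⟨k+1, fun s => if s ≤ k then c s else z, by simpa, by simp, ?_⟩
    intro s hs
    rcases lt_or_eq_of_le (Nat.lt_succ_iff.mp hs) with h | h
    · simp only [if_pos (le_of_lt h), if_pos (Nat.succ_le_of_lt h)]
      exact hch s h
    · subst h
      simp only [le_refl, if_pos, if_neg (Nat.not_succ_le_self s), hk]
      exact hR

/-- The reflexive transitive closure of `pathBelowRel` is antisymmetric. -/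
lemma pathBelowRel.antisymm {n : ℕ} {a b : Fin n → ℝ} {f : Fin n → ℝ → ℝ}
    (hcont : ∀ i, ContinuousOn (f i) (Icc (a i) (b i)))
    (hdisj : ∀ i j : Fin n, i ≠ j →
      ∀ x ∈ Icc (a i) (b i) ∩ Icc (a j) (b j), f i x ≠ f j x)
    {i j : Fin n} (hij : Relation.ReflTransGen (pathBelowRel a b f) i j)
    (hji : Relation.ReflTransGen (pathBelowRel a b f) j i) : i = j := by
  obtain ⟨k1, c1, hc10, hc1k, hch1⟩ := chain_of_rtg hij
  obtain ⟨k2, c2, hc20, hc2k, hch2⟩ := chain_of_rtg hji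
  rcases Nat.eq_zero_or_pos k1 with h1 | h1
  · subst h1; rw [← hc10, hc1k]
  rcases Nat.eq_zero_or_pos k2 with h2 | h2
  · subst h2; rw [← hc2k, hc20]
  exfalso
  set c : ℕ → Fin n := fun s => if s < k1 then c1 s else c2 (s - k1) with hc
  refine pathBelowRel.noCycle hcont hdisj (k1 + k2) (by omega) c ?_ ?_
  · intro s hs
    rcases lt_or_ge s k1 with h | h
    · have hcs : c s = c1 s := by simp [hc, h]
      rcases lt_or_eq_of_le (Nat.succ_le_of_lt h) with h' | h'
      · have : c (s+1) = c1 (s+1) := by simp [hc, h']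
        rw [hcs, this]; exact hch1 s h
      · have : c (s+1) = c2 0 := by
          have hnl : ¬ s + 1 < k1 := by omega
          simp only [hc, if_neg hnl, show s + 1 - k1 = 0 by omega]
        rw [hcs, this, hc20, ← hc1k, ← h']
        exact hch1 s h
    · have hcs : c s = c2 (s - k1) := by simp [hc, Nat.not_lt.mpr h]
      have hcs' : c (s+1) = c2 (s - k1 + 1) := by
        have : ¬ s + 1 < k1 := by omega
        simp only [hc, if_neg this]
        congr 1
        omega
      rw [hcs, hcs']
      exact hch2 (s - k1) (by omega)
  · have h1' : c (k1 + k2) = c2 k2 := by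
      have : ¬ k1 + k2 < k1 := by omega
      simp only [hc, if_neg this]
      congr 1
      omega
    have h2' : c 0 = c1 0 := if_pos h1
    rw [h1', h2', hc2k, hc10]

/-- A finite `sup'` of continuous real functions is continuous. -/
lemma continuous_finset_sup' {ι : Type*} (Q : Finset ι) (hQ : Q.Nonempty) (g : ι → ℝ → ℝ)
    (hg : ∀ j ∈ Q, Continuous (g j)) :
    Continuous (fun x => Q.sup' hQ (fun j => g j x)) := by
  induction hQ using Finset.Nonempty.cons_induction with
  | singleton a => simpa using hg a (by simp)
  | cons a s ha hs ih =>
    simp only [Finset.sup'_cons hs]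
    exact (hg a (by simp)).max (ih (fun j hj => hg j (by simp [hj])))

/-- Penalized extensions: a continuous `G` that is strictly below `fm` on `Icc aj bj ∩ Icc am bm`
can be pushed below `fm` on all of `Icc am bm` by subtracting a multiple of the distance
to `Icc aj bj`. -/
lemma exists_penalty {aj bj am bm : ℝ} (habj : aj ≤ bj) (habm : am ≤ bm)
    {G fm : ℝ → ℝ} (hG : Continuous G) (hfm : ContinuousOn fm (Icc am bm))
    (hlt : ∀ x ∈ Icc aj bj ∩ Icc am bm, G x < fm x) :
    ∃ C : ℝ, 0 ≤ C ∧
      ∀ x ∈ Icc am bm, G x - C * Metric.infDist x (Icc aj bj) ≤ fm x := by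
  classical
  set dd : ℝ → ℝ := fun x => Metric.infDist x (Icc aj bj) with hdd
  have hddc : Continuous dd := Metric.continuous_infDist_pt _
  set K : Set ℝ := Icc am bm ∩ (fun x => fm x - G x) ⁻¹' Iic 0 with hK
  have hKcl : IsClosed K :=
    ContinuousOn.preimage_isClosed_of_isClosed (hfm.sub hG.continuousOn) isClosed_Icc
      isClosed_Iic
  have hKcp : IsCompact K := (isCompact_Icc).of_isClosed_subset hKcl inter_subset_left
  rcases K.eq_empty_or_nonempty with hKe | hKne
  · refine ⟨0, le_rfl, fun x hx => ?_⟩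
    have hxK : x ∉ K := by rw [hKe]; exact notMem_empty x
    have : ¬ (fm x - G x ≤ 0) := fun hcon => hxK ⟨hx, hcon⟩
    push_neg at this
    simp only [zero_mul]
    linarith
  · obtain ⟨x0, hx0K, hmin⟩ := hKcp.exists_isMinOn hKne hddc.continuousOn
    have hδ : 0 < dd x0 := by
      rcases lt_or_eq_of_le (Metric.infDist_nonneg (x := x0) (s := Icc aj bj)) with h | h
      · exact h
      · exfalso
        have hx0j : x0 ∈ Icc aj bj :=
          (isClosed_Icc.mem_iff_infDist_zero (nonempty_Icc.mpr habj)).mpr h.symm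
        have := hlt x0 ⟨hx0j, hx0K.1⟩
        have := hx0K.2
        simp only [mem_preimage, mem_Iic] at this
        linarith
    obtain ⟨x1, hx1, hmax⟩ := isCompact_Icc.exists_isMaxOn (nonempty_Icc.mpr habm)
      (hG.continuousOn.sub hfm)
    set M : ℝ := G x1 - fm x1 with hM
    refine ⟨max M 0 / dd x0, div_nonneg (le_max_right _ _) hδ.le, fun x hx => ?_⟩
    by_cases hxK : x ∈ K
    · have hd : dd x0 ≤ dd x := hmin hxK
      have hC : max M 0 / dd x0 * dd x0 ≤ max M 0 / dd x0 * dd x :=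
        mul_le_mul_of_nonneg_left hd (div_nonneg (le_max_right _ _) hδ.le)
      rw [div_mul_cancel₀ _ (ne_of_gt hδ)] at hC
      have hMx : G x - fm x ≤ M := hmax hx
      have : G x - fm x ≤ max M 0 := le_trans hMx (le_max_left _ _)
      linarith
    · have : ¬ (fm x - G x ≤ 0) := fun hcon => hxK ⟨hx, hcon⟩
      push_neg at this
      have hd0 : 0 ≤ dd x := Metric.infDist_nonneg
      have : 0 ≤ max M 0 / dd x0 * dd x :=
        mul_nonneg (div_nonneg (le_max_right _ _) hδ.le) hd0
      linarith

/-- A disjoint family of x-monotone paths (graphs of continuous functions on compact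
intervals) can be extended to unbounded curves: there are continuous functions
`F i : ℝ → ℝ` agreeing with `f i` on its domain, whose relative vertical order agrees
with that of the `f i` on every overlap of the original domains, and whose graphs are
weakly ordered (for `i ≠ j`, either `F i ≤ F j` everywhere or `F j ≤ F i` everywhere). -/
theorem extend_disjoint_paths_to_unbounded_curves
    (n : ℕ) (a b : Fin n → ℝ) (hab : ∀ i, a i ≤ b i)
    (f : Fin n → ℝ → ℝ)
    (hcont : ∀ i, ContinuousOn (f i) (Set.Icc (a i) (b i)))
    (hdisj : ∀ i j : Fin n, i ≠ j →
      ∀ x ∈ Set.Icc (a i) (b i) ∩ Set.Icc (a j) (b j), f i x ≠ f j x) :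
    ∃ F : Fin n → ℝ → ℝ,
      (∀ i, Continuous (F i)) ∧
      (∀ i, ∀ x ∈ Set.Icc (a i) (b i), F i x = f i x) ∧
      (∀ i j : Fin n, i ≠ j →
        ∀ x ∈ Set.Icc (a i) (b i) ∩ Set.Icc (a j) (b j),
          (F i x < F j x ↔ f i x < f j x)) ∧
      (∀ i j : Fin n, i ≠ j →
        (∀ x : ℝ, F i x ≤ F j x) ∨ (∀ x : ℝ, F j x ≤ F i x)) := by
  classical
  -- the partial order generated by the "below on overlap" relation
  set r : Fin n → Fin n → Prop := Relation.ReflTransGen (pathBelowRel a b f) with hrdef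
  haveI hpo : IsPartialOrder (Fin n) r :=
    { refl := fun _ => Relation.ReflTransGen.refl
      trans := fun _ _ _ hxy hyz => hxy.trans hyz
      antisymm := fun _ _ hxy hyx => pathBelowRel.antisymm hcont hdisj hxy hyx }
  obtain ⟨s, hlin, hrs⟩ := extend_partialOrder r
  haveI := hlin
  -- the key pointwise consequence
  have hkey : ∀ i j : Fin n, i ≠ j → s i j →
      ∀ x ∈ Set.Icc (a i) (b i) ∩ Set.Icc (a j) (b j), f i x < f j x := by
    intro i j hij hsij x hx
    by_contra hcon
    push_neg at hcon
    have hlt : f j x < f i x := lt_of_le_of_ne hcon (fun he => hdisj i j hij x hx he.symm)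
    have hR : pathBelowRel a b f j i := ⟨hij.symm, x, ⟨hx.2, hx.1⟩, hlt⟩
    have hsji : s j i := hrs j i (Relation.ReflTransGen.single hR)
    exact hij (antisymm hsij hsji)
  -- the clamped extensions
  set G : Fin n → ℝ → ℝ := fun i x => f i (max (a i) (min x (b i))) with hGdef
  have hGcont : ∀ i, Continuous (G i) := by
    intro i
    apply (hcont i).comp_continuous
    · exact (continuous_const.max (continuous_id.min continuous_const))
    · intro x
      exact ⟨le_max_left _ _, max_le (hab i) (min_le_right _ _)⟩
  have hGeq : ∀ i, ∀ x ∈ Set.Icc (a i) (b i), G i x = f i x := by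
    intro i x hx
    have : max (a i) (min x (b i)) = x := by
      rw [min_eq_left hx.2, max_eq_right hx.1]
    simp only [hGdef, this]
  -- penalties
  have hCex : ∀ j m : Fin n, ∃ C : ℝ, 0 ≤ C ∧ ((j ≠ m ∧ s j m) →
      ∀ x ∈ Set.Icc (a m) (b m),
        G j x - C * Metric.infDist x (Set.Icc (a j) (b j)) ≤ f m x) := by
    intro j m
    by_cases h : j ≠ m ∧ s j m
    · have hlt : ∀ x ∈ Set.Icc (a j) (b j) ∩ Set.Icc (a m) (b m), G j x < f m x := by
        intro x hx
        rw [hGeq j x hx.1]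
        exact hkey j m h.1 h.2 x hx
      obtain ⟨C, hC0, hC⟩ := exists_penalty (hab j) (hab m) (hGcont j) (hcont m) hlt
      exact ⟨C, hC0, fun _ => hC⟩
    · exact ⟨0, le_rfl, fun h' => absurd h' h⟩
  choose C hC0 hC using hCex
  set CC : Fin n → ℝ := fun j => ∑ m, C j m with hCCdef
  have hCCge : ∀ j m : Fin n, C j m ≤ CC j := fun j m =>
    Finset.single_le_sum (fun m' _ => hC0 j m') (Finset.mem_univ m)
  -- the penalized extensions
  set H : Fin n → ℝ → ℝ :=
    fun j x => G j x - CC j * Metric.infDist x (Set.Icc (a j) (b j)) with hHdef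
  have hHcont : ∀ j, Continuous (H j) :=
    fun j => (hGcont j).sub (continuous_const.mul (Metric.continuous_infDist_pt _))
  have hHeq : ∀ j, ∀ x ∈ Set.Icc (a j) (b j), H j x = f j x := by
    intro j x hx
    simp only [hHdef, Metric.infDist_zero_of_mem hx, mul_zero, sub_zero]
    exact hGeq j x hx
  have hHle : ∀ j m : Fin n, j ≠ m → s j m → ∀ x ∈ Set.Icc (a m) (b m), H j x ≤ f m x := by
    intro j m hne hsjm x hx
    have h1 : H j x ≤ G j x - C j m * Metric.infDist x (Set.Icc (a j) (b j)) := by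
      have := mul_le_mul_of_nonneg_right (hCCge j m) (Metric.infDist_nonneg
        (x := x) (s := Set.Icc (a j) (b j)))
      simp only [hHdef]
      linarith
    exact le_trans h1 (hC j m ⟨hne, hsjm⟩ x hx)
  -- the final functions: sup of all H j for j ≤ i
  set Q : Fin n → Finset (Fin n) := fun i => Finset.univ.filter (fun jj => s jj i) with hQdef
  have hQself : ∀ i, i ∈ Q i := by
    intro i
    simp only [hQdef, Finset.mem_filter, Finset.mem_univ, true_and]
    exact refl_of s i
  have hQne : ∀ i, (Q i).Nonempty := fun i => ⟨i, hQself i⟩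
  set FF : Fin n → ℝ → ℝ := fun i x => (Q i).sup' (hQne i) (fun j => H j x) with hFFdef
  have hagree : ∀ i, ∀ x ∈ Set.Icc (a i) (b i), FF i x = f i x := by
    intro i x hx
    apply le_antisymm
    · apply Finset.sup'_le
      intro j hj
      have hsji : s j i := by
        simpa only [hQdef, Finset.mem_filter, Finset.mem_univ, true_and] using hj
      by_cases hji : j = i
      · subst hji
        rw [hHeq j x hx]
      · exact hHle j i hji hsji x hx
    · have := Finset.le_sup' (fun j => H j x) (hQself i)
      rwa [hHeq i x hx] at this
  have hmono : ∀ i j : Fin n, s i j → ∀ x : ℝ, FF i x ≤ FF j x := by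
    intro i j h x
    have hsub : Q i ⊆ Q j := by
      intro jj hjj
      simp only [hQdef, Finset.mem_filter, Finset.mem_univ, true_and] at hjj ⊢
      exact trans_of s hjj h
    exact Finset.sup'_mono (fun j => H j x) hsub (hQne i)
  refine ⟨FF, ?_, hagree, ?_, ?_⟩
  · intro i
    exact continuous_finset_sup' (Q i) (hQne i) H (fun j _ => hHcont j)
  · intro i j hij x hx
    rw [hagree i x hx.1, hagree j x hx.2]
  · intro i j hij
    rcases total_of s i j with h | h
    · exact Or.inl (hmono i j h)
    · exact Or.inr (hmono j i h)
end

section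
/- A connected set joining the left and right sides of a closed axis-parallel rectangle separates the rectangle: if R = [a,b] × [c,d] and P ⊆ R is a compact connected set containing a point on {a} × [c,d] and a point on {b} × [c,d], then any compact connected set Q ⊆ R disjoint from P that contains a point of the top edge [a,b] × {d} and a point of the bottom edge [a,b] × {c} must be empty; i.e., no such Q exists. -/
open Set

/-!
Thicken `P` and `Q` by an `ε` small enough that the thickenings stay disjoint. Inside the convex
rectangle these thickenings are relatively open and connected, hence path-connected, so they
contain a path `γ` from the left to the right edge and a path `η` from the bottom to the top edge.
The map `(s, t) ↦ γ s - η t` on the unit square has the sign pattern of the Poincaré–Miranda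
theorem on the four sides. Were it zero-free, it would have a continuous logarithm on the simply
connected square, and the imaginary part of that logarithm would turn by a clockwise quarter turn
along each side, i.e. by `-2π` around the boundary: impossible for a single-valued function.
-/

open Real unitInterval

section Trig

variable {X : Type*} [TopologicalSpace X] [PreconnectedSpace X] {g : X → ℝ}

theorem mem_Icc_zero_pi_of_sin_nonneg (hg : Continuous g) (hsin : ∀ x, 0 ≤ sin (g x)) {x y : X}
    (hx : g x ∈ Icc 0 π) : g y ∈ Icc 0 π := by
  obtain ⟨hx₀, hxπ⟩ := hx
  have hπ := pi_pos
  have hneg : ∀ c ∈ range g, ¬sin c < 0 := by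
    rintro _ ⟨z, rfl⟩
    exact (hsin z).not_gt
  by_contra hy
  rcases not_and_or.1 hy with hy | hy <;> rw [not_le] at hy
  · -- `g` takes a value in `[-π/2, 0)`
    set c := max (g y) (-(π / 2))
    have hc : c ∈ Icc (g y) (g x) := ⟨le_max_left _ _, max_le (by linarith) (by linarith)⟩
    refine hneg c (intermediate_value_univ y x hg hc) (sin_neg_of_neg_of_neg_pi_lt ?_ ?_)
    · exact max_lt hy (by linarith)
    · exact lt_max_of_lt_right (by linarith)
  · -- `g` takes a value in `(π, 3π/2]`
    set c := min (g y) (3 * π / 2)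
    have hc : c ∈ Icc (g x) (g y) := ⟨le_min (by linarith) (by linarith), min_le_left _ _⟩
    refine hneg c (intermediate_value_univ x y hg hc) ?_
    rw [← sin_sub_two_pi]
    exact sin_neg_of_neg_of_neg_pi_lt (by linarith [min_le_right (g y) (3 * π / 2)])
      (by linarith [lt_min hy (by linarith : π < 3 * π / 2)])

theorem mem_Icc_zero_pi_div_two_of_sin_nonneg (hg : Continuous g) (hsin : ∀ x, 0 ≤ sin (g x))
    {x y : X} (hx : g x ∈ Icc (π / 2) π) (hy : 0 ≤ cos (g y)) : g y ∈ Icc 0 (π / 2) := by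
  have h := mem_Icc_zero_pi_of_sin_nonneg hg hsin (y := y) ⟨by linarith [hx.1, pi_pos], hx.2⟩
  refine ⟨h.1, not_lt.1 fun hlt => hy.not_gt (cos_neg_of_pi_div_two_lt_of_lt hlt ?_)⟩
  linarith [h.2, pi_pos]

end Trig

namespace Complex

theorem re_exp_nonneg_iff (z : ℂ) : 0 ≤ (exp z).re ↔ 0 ≤ Real.cos z.im := by
  rw [exp_re, mul_nonneg_iff_of_pos_left (Real.exp_pos _)]

theorem re_exp_nonpos_iff (z : ℂ) : (exp z).re ≤ 0 ↔ Real.cos z.im ≤ 0 := by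
  rw [← neg_nonneg, ← neg_nonneg (a := Real.cos _), exp_re, ← mul_neg,
    mul_nonneg_iff_of_pos_left (Real.exp_pos _)]

theorem im_exp_nonneg_iff (z : ℂ) : 0 ≤ (exp z).im ↔ 0 ≤ Real.sin z.im := by
  rw [exp_im, mul_nonneg_iff_of_pos_left (Real.exp_pos _)]

theorem im_exp_nonpos_iff (z : ℂ) : (exp z).im ≤ 0 ↔ Real.sin z.im ≤ 0 := by
  rw [← neg_nonneg, ← neg_nonneg (a := Real.sin _), exp_im, ← mul_neg,
    mul_nonneg_iff_of_pos_left (Real.exp_pos _)]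

theorem pi_div_two_le_arg {z : ℂ} (hre : z.re ≤ 0) (him : 0 ≤ z.im) (hz : z ≠ 0) :
    π / 2 ≤ arg z := by
  by_contra h
  rcases arg_lt_pi_div_two_iff.1 (not_le.1 h) with h | h | h
  exacts [hre.not_gt h, him.not_gt h, hz h]

end Complex

namespace unitInterval

instance : ContractibleSpace I := (convex_Icc (0 : ℝ) 1).contractibleSpace ⟨0, zero_mem⟩

instance : LocallyPathConnectedSpace I := (convex_Icc (0 : ℝ) 1).locallyPathConnectedSpace

end unitInterval

theorem exists_eq_zero_of_boundary_signs (f : C(I × I, ℂ))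
    (hleft : ∀ t, (f (0, t)).re ≤ 0) (hright : ∀ t, 0 ≤ (f (1, t)).re)
    (hbot : ∀ s, 0 ≤ (f (s, 0)).im) (htop : ∀ s, (f (s, 1)).im ≤ 0) : ∃ p, f p = 0 := by
  by_contra! hf
  obtain ⟨F, ⟨hF₀, hF⟩, -⟩ := Complex.isCoveringMapOn_exp.existsUnique_continuousMap_lifts f
    (Complex.exp_log (hf (0, 0))) hf
  set θ : I × I → ℝ := fun p => (F p).im
  have hθ : Continuous θ := Complex.continuous_im.comp F.continuous
  have h₀ : θ (0, 0) ∈ Icc (π / 2) π := by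
    simp only [θ, hF₀, Complex.log_im]
    exact ⟨Complex.pi_div_two_le_arg (hleft 0) (hbot 0) (hf _), Complex.arg_le_pi _⟩
  simp only [← hF, Function.comp_apply, Complex.re_exp_nonneg_iff, Complex.re_exp_nonpos_iff,
    Complex.im_exp_nonneg_iff, Complex.im_exp_nonpos_iff] at hleft hright hbot htop
  have h₁ : θ (1, 0) ∈ Icc 0 (π / 2) :=
    mem_Icc_zero_pi_div_two_of_sin_nonneg (g := fun s => θ (s, 0)) (by fun_prop) hbot h₀
      (hright 0)
  have h₂ : θ (1, 1) + π / 2 ∈ Icc 0 (π / 2) :=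
    mem_Icc_zero_pi_div_two_of_sin_nonneg (g := fun t => θ (1, t) + π / 2) (by fun_prop)
      (by simpa [sin_add_pi_div_two] using hright) (x := 0)
      ⟨by linarith [h₁.1], by linarith [h₁.2]⟩ (by simpa [cos_add_pi_div_two] using htop 1)
  have h₃ : θ (0, 1) + π ∈ Icc 0 (π / 2) :=
    mem_Icc_zero_pi_div_two_of_sin_nonneg (g := fun s => θ (s, 1) + π) (by fun_prop)
      (by simpa [sin_add_pi] using htop) (x := 1)
      ⟨by linarith [h₂.1], by linarith [h₂.2]⟩ (by simpa [cos_add_pi] using hleft 1)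
  have h₄ : θ (0, 0) + π + π / 2 ∈ Icc 0 (π / 2) :=
    mem_Icc_zero_pi_div_two_of_sin_nonneg (g := fun t => θ (0, t) + π + π / 2) (by fun_prop)
      (by simpa [sin_add_pi_div_two, cos_add_pi] using hleft) (x := 1)
      ⟨by linarith [h₃.1], by linarith [h₃.2]⟩
      (by simpa [cos_add_pi_div_two, sin_add_pi] using hbot 0)
  linarith [h₀.1, h₄.2, pi_pos]

theorem Path.exists_eq_of_crossing {p₀ p₁ q₀ q₁ : ℝ × ℝ} (γ : Path p₀ p₁) (η : Path q₀ q₁)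
    (hleft : ∀ t, p₀.1 ≤ (η t).1) (hright : ∀ t, (η t).1 ≤ p₁.1)
    (hbot : ∀ s, q₀.2 ≤ (γ s).2) (htop : ∀ s, (γ s).2 ≤ q₁.2) : ∃ s t, γ s = η t := by
  let f : C(I × I, ℂ) := ⟨fun p => Complex.equivRealProdCLM.symm (γ p.1 - η p.2), by fun_prop⟩
  obtain ⟨⟨s, t⟩, hst⟩ := exists_eq_zero_of_boundary_signs f
    (fun t => by simpa [f] using hleft t) (fun t => by simpa [f] using hright t)
    (fun s => by simpa [f] using hbot s) (fun s => by simpa [f] using htop s)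
  exact ⟨s, t, Complex.equivRealProdCLM.symm.injective (sub_eq_zero.1 (by simpa [f] using hst))⟩

theorem IsConnected.isPathConnected_inter_of_isOpen {X : Type*} [TopologicalSpace X]
    {S U : Set X} [LocallyPathConnectedSpace S] (h : IsConnected (S ∩ U)) (hU : IsOpen U) :
    IsPathConnected (S ∩ U) := by
  rw [← Subtype.image_preimage_coe] at h ⊢
  have hV : IsConnected (((↑) : S → X) ⁻¹' U) :=
    ⟨h.nonempty.of_image, Topology.IsInducing.subtypeVal.isPreconnected_image.1 h.isPreconnected⟩
  exact ((hU.preimage continuous_subtype_val).isConnected_iff_isPathConnected.1 hV).image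
    continuous_subtype_val

open Metric in
theorem IsConnected.inter_thickening {E : Type*} [NormedAddCommGroup E] [NormedSpace ℝ E]
    {S P : Set E} (hP : IsConnected P) (hPS : P ⊆ S) (hS : Convex ℝ S) {ε : ℝ} (hε : 0 < ε) :
    IsConnected (S ∩ thickening ε P) := by
  obtain ⟨p₀, hp₀⟩ := hP.nonempty
  have hP_sub : P ⊆ S ∩ thickening ε P := subset_inter hPS (self_subset_thickening hε P)
  refine ⟨⟨p₀, hP_sub hp₀⟩, isPreconnected_of_forall p₀ ?_⟩
  rintro y ⟨hyS, hy⟩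
  obtain ⟨p, hp, hyp⟩ := mem_thickening_iff.1 hy
  refine ⟨P ∪ (S ∩ ball p ε), union_subset hP_sub ?_, Or.inl hp₀, Or.inr ⟨hyS, hyp⟩, ?_⟩
  · exact inter_subset_inter_right S (ball_subset_thickening hp ε)
  · exact hP.isPreconnected.union p hp ⟨hPS hp, mem_ball_self hε⟩
      (hS.inter (convex_ball p ε)).isPreconnected

open Metric in
theorem IsConnected.joinedIn_inter_thickening {E : Type*} [NormedAddCommGroup E]
    [NormedSpace ℝ E] {S P : Set E} (hP : IsConnected P) (hPS : P ⊆ S) (hS : Convex ℝ S)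
    {ε : ℝ} (hε : 0 < ε) {x y : E} (hx : x ∈ P) (hy : y ∈ P) :
    JoinedIn (S ∩ thickening ε P) x y :=
  haveI := hS.locallyPathConnectedSpace
  ((hP.inter_thickening hPS hS hε).isPathConnected_inter_of_isOpen isOpen_thickening).joinedIn
    x ⟨hPS hx, self_subset_thickening hε P hx⟩ y ⟨hPS hy, self_subset_thickening hε P hy⟩

theorem rectangle_crossing_paths_meet_general
    (a b c d : ℝ)
    (R : Set (ℝ × ℝ)) (hR : R = Set.Icc a b ×ˢ Set.Icc c d)
    (P Q : Set (ℝ × ℝ))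
    (hPR : P ⊆ R) (hPcomp : IsCompact P) (hPconn : IsConnected P)
    (hPleft : (P ∩ {a} ×ˢ Set.Icc c d).Nonempty)
    (hPright : (P ∩ {b} ×ˢ Set.Icc c d).Nonempty)
    (hQR : Q ⊆ R) (hQcomp : IsCompact Q) (hQconn : IsConnected Q)
    (hQtop : (Q ∩ Set.Icc a b ×ˢ {d}).Nonempty)
    (hQbot : (Q ∩ Set.Icc a b ×ˢ {c}).Nonempty)
    (hdisj : Disjoint P Q) :
    False := by
  obtain ⟨ε, hε, hPQ⟩ := hdisj.exists_thickenings hPcomp hQcomp.isClosed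
  have hRconv : Convex ℝ R := hR ▸ (convex_Icc a b).prod (convex_Icc c d)
  obtain ⟨p₀, hp₀, ⟨rfl : p₀.1 = a, -⟩⟩ := hPleft
  obtain ⟨p₁, hp₁, ⟨rfl : p₁.1 = b, -⟩⟩ := hPright
  obtain ⟨q₀, hq₀, ⟨-, rfl : q₀.2 = c⟩⟩ := hQbot
  obtain ⟨q₁, hq₁, ⟨-, rfl : q₁.2 = d⟩⟩ := hQtop
  obtain ⟨γ, hγ⟩ := hPconn.joinedIn_inter_thickening hPR hRconv hε hp₀ hp₁
  obtain ⟨η, hη⟩ := hQconn.joinedIn_inter_thickening hQR hRconv hε hq₀ hq₁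
  have hγR (s : I) : γ s ∈ Icc p₀.1 p₁.1 ×ˢ Icc q₀.2 q₁.2 := hR ▸ (hγ s).1
  have hηR (t : I) : η t ∈ Icc p₀.1 p₁.1 ×ˢ Icc q₀.2 q₁.2 := hR ▸ (hη t).1
  obtain ⟨s, t, hst⟩ := γ.exists_eq_of_crossing η (fun t => (hηR t).1.1) (fun t => (hηR t).1.2)
    (fun s => (hγR s).2.1) (fun s => (hγR s).2.2)
  exact hPQ.ne_of_mem (hγ s).2 (hη t).2 hst

/-- Crossing paths in a rectangle must meet: if a compact connected subset `P` of the
closed rectangle `R = [a,b] × [c,d]` joins the left and right edges, then there is no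
compact connected subset `Q` of `R`, disjoint from `P`, joining the top and bottom
edges. -/
theorem rectangle_crossing_paths_meet
    (a b c d : ℝ) (hab : a < b) (hcd : c < d)
    (R : Set (ℝ × ℝ)) (hR : R = Set.Icc a b ×ˢ Set.Icc c d)
    (P Q : Set (ℝ × ℝ))
    (hPR : P ⊆ R) (hPcomp : IsCompact P) (hPconn : IsConnected P)
    (hPleft : (P ∩ {a} ×ˢ Set.Icc c d).Nonempty)
    (hPright : (P ∩ {b} ×ˢ Set.Icc c d).Nonempty)
    (hQR : Q ⊆ R) (hQcomp : IsCompact Q) (hQconn : IsConnected Q)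
    (hQtop : (Q ∩ Set.Icc a b ×ˢ {d}).Nonempty)
    (hQbot : (Q ∩ Set.Icc a b ×ˢ {c}).Nonempty)
    (hdisj : Disjoint P Q) :
    False :=
  rectangle_crossing_paths_meet_general a b c d R hR P Q hPR hPcomp hPconn hPleft hPright hQR hQcomp
    hQconn hQtop hQbot hdisj
end

section
/- If a bounded polyhedron (intersection of finitely many closed half-spaces) in ℝ^m is nonempty, then it has a vertex, i.e., a point that is the unique solution of a subsystem of m of the defining hyperplane equations; consequently, if the half-spaces have rational coefficients of bit-length at most L, the polyhedron contains a rational point each of whose coordinates has bit-length polynomial in m and L. -/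
/-!
Call a constraint tight at `x` if it holds with equality there; `x` is a vertex exactly when the
tight rows have trivial common kernel. Take `x` in the polyhedron whose tight kernel is minimal
(submodules of a finite-dimensional space are well-founded). A nonzero direction `d` in that
kernel is not a recession direction of the bounded polyhedron, so some constraint increases along
`d`; moving along `d` until the first such constraint becomes tight keeps the old tight
constraints and adds one that does not vanish on `d`, which shrinks the kernel. Hence the tight
rows at `x` span, and a basis among them is a square subsystem with unique solution `x`. When the
data are rational, that square system is injective over `ℚ`, hence surjective, so its rational
solution is `x`.
-/

open Matrix Module

section LinearAlgebra

variable {ι n 𝕜 : Type*} [Fintype n] [Field 𝕜]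

def rowKernel (A : ι → n → 𝕜) (t : Set ι) : Submodule 𝕜 (n → 𝕜) :=
  LinearMap.ker (mulVecLin (of (t.domRestrict A)))

def tightSet (A : ι → n → 𝕜) (b : ι → 𝕜) (x : n → 𝕜) : Set ι := {i | A i ⬝ᵥ x = b i}

theorem mem_rowKernel {A : ι → n → 𝕜} {t : Set ι} {d : n → 𝕜} :
    d ∈ rowKernel A t ↔ ∀ i ∈ t, A i ⬝ᵥ d = 0 := by
  simp [rowKernel, funext_iff, mulVec]

theorem rowKernel_anti {A : ι → n → 𝕜} {t u : Set ι} (h : t ⊆ u) :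
    rowKernel A u ≤ rowKernel A t :=
  fun _ hd => mem_rowKernel.2 fun i hi => mem_rowKernel.1 hd i (h hi)

theorem rowKernel_eq_bot_iff [Finite ι] {A : ι → n → 𝕜} {t : Set ι} :
    rowKernel A t = ⊥ ↔ Submodule.span 𝕜 (A '' t) = ⊤ := by
  have h := (mulVecLin (of (t.domRestrict A))).finrank_range_add_finrank_ker
  rw [← rank, rank_eq_finrank_span_row, finrank_fintype_fun_eq_card,
    show Set.range (of (t.domRestrict A)).row = A '' t from Set.range_domRestrict A t] at h
  rw [Submodule.eq_top_iff_finrank_eq, ← Submodule.finrank_eq_zero, finrank_fintype_fun_eq_card]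
  change _ + finrank 𝕜 (rowKernel A t) = _ at h
  omega

theorem exists_finset_subset_card_eq_span_eq_top {A : ι → n → 𝕜} {t : Set ι}
    (ht : Submodule.span 𝕜 (A '' t) = ⊤) :
    ∃ s : Finset ι, ↑s ⊆ t ∧ s.card = Fintype.card n ∧ Submodule.span 𝕜 (A '' s) = ⊤ := by
  classical
  obtain ⟨κ, a, ha, hspan, hli⟩ := exists_linearIndependent' 𝕜 (t.domRestrict A)
  have : Fintype κ := @Fintype.ofFinite κ hli.finite
  set s : Finset ι := Finset.univ.image fun k => (a k : ι)
  have hrange : Set.range (t.domRestrict A ∘ a) = A '' s := by ext; simp [s]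
  rw [Set.range_domRestrict, ht] at hspan
  refine ⟨s, by simp [s, Set.subset_def], ?_, hrange ▸ hspan⟩
  rw [Finset.card_image_of_injective (f := fun k => (a k : ι)) _ (Subtype.val_injective.comp ha),
    Finset.card_univ, linearIndependent_iff_card_eq_finrank_span.1 hli, Set.finrank, hspan,
    finrank_top, finrank_fintype_fun_eq_card]

theorem eq_of_span_eq_top [Finite ι] {A : ι → n → 𝕜} {b : ι → 𝕜} {s : Set ι}
    (hs : Submodule.span 𝕜 (A '' s) = ⊤) {x y : n → 𝕜}
    (hx : ∀ i ∈ s, A i ⬝ᵥ x = b i) (hy : ∀ i ∈ s, A i ⬝ᵥ y = b i) : y = x := by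
  have : y - x ∈ rowKernel A s :=
    mem_rowKernel.2 fun i hi => by rw [dotProduct_sub, hx i hi, hy i hi, sub_self]
  rwa [rowKernel_eq_bot_iff.2 hs, Submodule.mem_bot, sub_eq_zero] at this

theorem exists_comp_eq_of_unique_solution {K L s : Type*} [Field K] [Field L] [Fintype s]
    (f : K →+* L) (hcard : Fintype.card s = Fintype.card n) (M : Matrix s n K) (c : s → K)
    {x : n → L} (hx : M.map f *ᵥ x = f ∘ c) (huniq : ∀ y, M.map f *ᵥ y = f ∘ c → y = x) :
    ∃ q : n → K, f ∘ q = x := by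
  have hinj : Function.Injective M.mulVecLin := by
    rw [← LinearMap.ker_eq_bot, ker_mulVecLin_eq_bot_iff]
    intro v hv
    have : x + f ∘ v = x := huniq _ <| by
      ext i
      rw [mulVec_add, Pi.add_apply, hx, ← RingHom.map_mulVec, hv]
      simp
    ext k
    simpa using congrFun this k
  obtain ⟨q, hq⟩ := (LinearMap.injective_iff_surjective_of_finrank_eq_finrank
    (by simp [hcard])).1 hinj c
  exact ⟨q, huniq _ <| funext fun i => by rw [← RingHom.map_mulVec, ← mulVecLin_apply, hq]; rfl⟩

end LinearAlgebra

section Polyhedron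

variable {ι n 𝕜 : Type*} [Fintype n] [Field 𝕜] [LinearOrder 𝕜] [IsStrictOrderedRing 𝕜]
  {A : ι → n → 𝕜} {b : ι → 𝕜}

def polyhedron (A : ι → n → 𝕜) (b : ι → 𝕜) : Set (n → 𝕜) := {x | ∀ i, A i ⬝ᵥ x ≤ b i}

theorem add_smul_mem_polyhedron {x d : n → 𝕜} (hx : x ∈ polyhedron A b)
    (hd : ∀ i, A i ⬝ᵥ d ≤ 0) {t : 𝕜} (ht : 0 ≤ t) : x + t • d ∈ polyhedron A b := fun i => by
  rw [dotProduct_add, dotProduct_smul, smul_eq_mul]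
  linarith [hx i, mul_nonpos_of_nonneg_of_nonpos ht (hd i)]

theorem exists_dotProduct_pos_of_bounded {R : 𝕜} (hR : ∀ x ∈ polyhedron A b, ∀ k, |x k| ≤ R)
    {x : n → 𝕜} (hx : x ∈ polyhedron A b) {d : n → 𝕜} (hd : d ≠ 0) : ∃ i, 0 < A i ⬝ᵥ d := by
  by_contra! hle
  obtain ⟨k, hk⟩ := Function.ne_iff.1 hd
  have hdk : 0 < |d k| := abs_pos.2 hk
  have hR0 : 0 ≤ R := (abs_nonneg _).trans (hR x hx k)
  set t := (R + |x k| + 1) / |d k|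
  have ht : 0 ≤ t := by positivity
  have hfar := hR _ (add_smul_mem_polyhedron hx hle ht) k
  have : R + |x k| + 1 ≤ |(x + t • d) k| + |x k| := calc
    R + |x k| + 1 = |(x + t • d) k - x k| := by
      simp [abs_mul, abs_of_nonneg ht, t, div_mul_cancel₀ _ hdk.ne']
    _ ≤ |(x + t • d) k| + |x k| := abs_sub _ _
  linarith

theorem exists_add_smul_mem_polyhedron_tight [Fintype ι] {x d : n → 𝕜} (hx : x ∈ polyhedron A b)
    {i : ι} (hi : 0 < A i ⬝ᵥ d) :
    ∃ t : 𝕜, x + t • d ∈ polyhedron A b ∧ ∃ j ∈ tightSet A b (x + t • d), 0 < A j ⬝ᵥ d := by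
  classical
  -- the ratio test of the simplex method: `j` is the first constraint met along the ray
  obtain ⟨j, hj, hmin⟩ := (Finset.univ.filter fun i => 0 < A i ⬝ᵥ d).exists_min_image
    (fun i => (b i - A i ⬝ᵥ x) / A i ⬝ᵥ d) ⟨i, by simpa using hi⟩
  simp only [Finset.mem_filter, Finset.mem_univ, true_and] at hj hmin
  refine ⟨(b j - A j ⬝ᵥ x) / A j ⬝ᵥ d, fun i => ?_, j, ?_, hj⟩
  · rw [dotProduct_add, dotProduct_smul, smul_eq_mul]
    rcases le_or_gt (A i ⬝ᵥ d) 0 with h | h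
    · have := mul_nonpos_of_nonneg_of_nonpos (div_nonneg (sub_nonneg.2 (hx j)) hj.le) h
      linarith [hx i]
    · linarith [(le_div_iff₀ h).1 (hmin i h)]
  · simp [tightSet, dotProduct_add, dotProduct_smul, div_mul_cancel₀ _ hj.ne']

theorem exists_rowKernel_tightSet_lt [Fintype ι] {x d : n → 𝕜} (hx : x ∈ polyhedron A b)
    (hd : d ∈ rowKernel A (tightSet A b x)) {i : ι} (hi : 0 < A i ⬝ᵥ d) :
    ∃ y ∈ polyhedron A b, rowKernel A (tightSet A b y) < rowKernel A (tightSet A b x) := by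
  obtain ⟨t, hy, j, hj, hjd⟩ := exists_add_smul_mem_polyhedron_tight hx hi
  refine ⟨_, hy, lt_of_le_of_ne (rowKernel_anti fun i hi => ?_) fun h => ?_⟩
  · have := mem_rowKernel.1 hd i hi
    simp_all [tightSet, dotProduct_add, dotProduct_smul]
  · exact hjd.ne' (mem_rowKernel.1 (h ▸ hd) j hj)

theorem exists_mem_polyhedron_rowKernel_tightSet_eq_bot [Fintype ι] {R : 𝕜}
    (hR : ∀ x ∈ polyhedron A b, ∀ k, |x k| ≤ R) (hne : (polyhedron A b).Nonempty) :
    ∃ x ∈ polyhedron A b, rowKernel A (tightSet A b x) = ⊥ := by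
  obtain ⟨_, ⟨x, hx, rfl⟩, hmin⟩ := wellFounded_lt.has_min
    ((fun x => rowKernel A (tightSet A b x)) '' polyhedron A b) (hne.image _)
  refine ⟨x, hx, by_contra fun hker => ?_⟩
  obtain ⟨d, hd, hd0⟩ := Submodule.exists_mem_ne_zero_of_ne_bot hker
  obtain ⟨i, hi⟩ := exists_dotProduct_pos_of_bounded hR hx hd0
  obtain ⟨y, hy, hlt⟩ := exists_rowKernel_tightSet_lt hx hd hi
  exact hmin _ ⟨y, hy, rfl⟩ hlt

end Polyhedron

/-- A nonempty bounded polyhedron in ℝ^m (a finite intersection of closed half-spaces)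
has a vertex: a point of the polyhedron that is the unique solution of a subsystem of
`m` of the defining hyperplane equations. Consequently, if all coefficients are
rational, the polyhedron contains a point with rational coordinates (of polynomial
bit-length, determined by an m × m linear system with those coefficients). -/
theorem bounded_polyhedron_has_vertex
    (m : ℕ) (ι : Type*) [Fintype ι]
    (A : ι → Fin m → ℝ) (b : ι → ℝ)
    (P : Set (Fin m → ℝ))
    (hP : P = {x | ∀ i : ι, ∑ k, A i k * x k ≤ b i})
    (hbounded : ∃ R : ℝ, ∀ x ∈ P, ∀ k, |x k| ≤ R)
    (hne : P.Nonempty) :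
    ∃ x ∈ P, (∃ s : Finset ι, s.card = m ∧
        ∀ y : Fin m → ℝ, (∀ i ∈ s, ∑ k, A i k * y k = b i) → y = x) ∧
      ((∀ i k, ∃ q : ℚ, A i k = (q : ℝ)) → (∀ i, ∃ q : ℚ, b i = (q : ℝ)) →
        ∀ k, ∃ q : ℚ, x k = (q : ℝ)) := by
  obtain ⟨R, hR⟩ := hbounded
  subst hP
  obtain ⟨x, hx, hker⟩ := exists_mem_polyhedron_rowKernel_tightSet_eq_bot (A := A) (b := b) hR hne
  obtain ⟨s, hst, hcard, hspan⟩ :=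
    exists_finset_subset_card_eq_span_eq_top (rowKernel_eq_bot_iff.1 hker)
  have huniq : ∀ y, (∀ i ∈ s, A i ⬝ᵥ y = b i) → y = x :=
    fun y => eq_of_span_eq_top hspan fun i hi => hst hi
  refine ⟨x, hx, ⟨s, by simpa using hcard, huniq⟩, fun hA hb => ?_⟩
  choose qA hqA using hA
  choose qb hqb using hb
  obtain rfl : A = fun i k => (qA i k : ℝ) := funext fun i => funext (hqA i)
  obtain rfl : b = fun i => (qb i : ℝ) := funext hqb
  obtain ⟨q, rfl⟩ := exists_comp_eq_of_unique_solution (Rat.castHom ℝ) (by simpa using hcard)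
    (fun i : s => qA i) (fun i => qb i) (funext fun i => hst i.2)
    fun y hy => huniq y fun i hi => congrFun hy ⟨i, hi⟩
  exact fun k => ⟨q k, rfl⟩
end
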